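/- Let X be a locally compact topological space, let P be the set of nonempty open subsets of X, and partially order P by O₁ ≤ O₂ if and only if O₁ = O₂ or O₂ is compact in O₁. Then two elements O₁, O₂ of P have a common upper bound in (P, ≤) if and only if O₁ ∩ O₂ ≠ ∅; consequently, if X is ccc then (P, ≤) is upwards-ccc, and for every dense open set O* of X the set {O ∈ P : O ⊆ O*} is cofinal in (P, ≤). -/

import Mathlib

/-- A topological space is ccc if any uncountable collection of nonempty open sets
has two distinct members with nonempty intersection. -/
def CCCSpace (X : Type) [TopologicalSpace X] : Prop :=
  ∀ 𝒞 : Set (Set X), (∀ U ∈ 𝒞, IsOpen U ∧ U.Nonempty) → ¬ 𝒞.Countable →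
    ∃ U ∈ 𝒞, ∃ V ∈ 𝒞, U ≠ V ∧ (U ∩ V).Nonempty

/-- A space is locally compact if every open set contains a compact neighborhood
of each of its points. -/
def LocCompactSp (X : Type) [TopologicalSpace X] : Prop :=
  ∀ O : Set X, IsOpen O → ∀ x ∈ O,
    ∃ K U : Set X, IsCompact K ∧ IsOpen U ∧ x ∈ U ∧ U ⊆ K ∧ K ⊆ O

/-- A subset is irreducible if it is closed, nonempty, and is not the union of
two proper closed subsets. -/
def IrredSet {X : Type} [TopologicalSpace X] (C : Set X) : Prop :=
  IsClosed C ∧ C.Nonempty ∧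
    ∀ A B : Set X, IsClosed A → IsClosed B → C = A ∪ B → C = A ∨ C = B

/-- A space is sober if it is T0 and every irreducible subset is the closure of a point. -/
def SoberSp (X : Type) [TopologicalSpace X] : Prop :=
  T0Space X ∧ ∀ C : Set X, IrredSet C → ∃ x : X, C = closure {x}

/-- `U` is compact in `V` if every open cover of `V` has a finite subcollection covering `U`. -/
def CompactIn {X : Type} [TopologicalSpace X] (U V : Set X) : Prop :=
  ∀ 𝒞 : Set (Set X), (∀ W ∈ 𝒞, IsOpen W) → V ⊆ ⋃₀ 𝒞 →
    ∃ 𝒻 : Set (Set X), 𝒻 ⊆ 𝒞 ∧ 𝒻.Finite ∧ U ⊆ ⋃₀ 𝒻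

/-- A space is core compact if every open set `O` is the union of the open sets
`O'` with `O'` compact in `O`. -/
def CoreCompact (X : Type) [TopologicalSpace X] : Prop :=
  ∀ O : Set X, IsOpen O → O = ⋃₀ {O' : Set X | IsOpen O' ∧ CompactIn O' O}

/-- A space is supersober if it is T0 and every ultrafilter has either the empty set
or the closure of a point as its set of limits. -/
def SuperSober (X : Type) [TopologicalSpace X] : Prop :=
  T0Space X ∧ ∀ F : Ultrafilter X,
    {x : X | (F : Filter X) ≤ nhds x} = (∅ : Set X) ∨
      ∃ y : X, {x : X | (F : Filter X) ≤ nhds x} = closure {y}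

/-- A poset is upwards-ccc if any uncountable subset has two distinct members with
a common upper bound. -/
def UpCCC (P : Type) [PartialOrder P] : Prop :=
  ∀ S : Set P, ¬ S.Countable → ∃ x ∈ S, ∃ y ∈ S, x ≠ y ∧ ∃ z : P, x ≤ z ∧ y ≤ z

/-- A subset of a poset is cofinal if every element of the poset is below some element of it. -/
def IsCofinalIn {P : Type} [PartialOrder P] (d : Set P) : Prop :=
  ∀ p : P, ∃ q ∈ d, p ≤ q

/-- A subset `R` of a poset is upwards-centered if every finite subset of `R`
has an upper bound in the poset. -/
def UpCentered {P : Type} [PartialOrder P] (R : Set P) : Prop :=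
  ∀ F : Set P, F ⊆ R → F.Finite → ∃ z : P, ∀ x ∈ F, x ≤ z

/-- A poset is upwards-σ-centered if it is the union of countably many
upwards-centered subsets. -/
def UpSigmaCentered (P : Type) [PartialOrder P] : Prop :=
  ∃ C : ℕ → Set P, (∀ n, UpCentered (C n)) ∧ (⋃ n, C n) = Set.univ

/-- Witness for the defining property of the cardinal 𝔪 at cardinal `κ`:
there are a nonempty upwards-ccc poset `P` and κ cofinal subsets of `P`
such that no upwards-directed subset of `P` meets every one of them. -/
def MWitness (κ : Cardinal) : Prop :=
  ∃ (P : Type) (inst : PartialOrder P), Nonempty P ∧ @UpCCC P inst ∧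
    ∃ D : Set (Set P), Cardinal.mk ↥D = κ ∧ (∀ d ∈ D, @IsCofinalIn P inst d) ∧
      ¬ ∃ S : Set P, DirectedOn inst.le S ∧ ∀ d ∈ D, (S ∩ d).Nonempty

/-- The cardinal 𝔪, the least cardinal admitting an `MWitness`. -/
noncomputable def cardM : Cardinal := sInf {κ : Cardinal | MWitness κ}

/-- Witness for the defining property of the cardinal 𝔭 at cardinal `κ`:
there are a nonempty upwards-σ-centered poset `P` and κ cofinal subsets of `P`
such that no upwards-directed subset of `P` meets every one of them. -/
def PWitness (κ : Cardinal) : Prop :=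
  ∃ (P : Type) (inst : PartialOrder P), Nonempty P ∧ @UpSigmaCentered P inst ∧
    ∃ D : Set (Set P), Cardinal.mk ↥D = κ ∧ (∀ d ∈ D, @IsCofinalIn P inst d) ∧
      ¬ ∃ S : Set P, DirectedOn inst.le S ∧ ∀ d ∈ D, (S ∩ d).Nonempty

/-- The cardinal 𝔭, the least cardinal admitting a `PWitness`. -/
noncomputable def cardP : Cardinal := sInf {κ : Cardinal | PWitness κ}

/-- The nonempty open subsets of a space. -/
def NonemptyOpens (X : Type) [TopologicalSpace X] : Type :=
  {U : Set X // IsOpen U ∧ U.Nonempty}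

/-- The nonempty open sets, partially ordered by reverse inclusion. -/
instance {X : Type} [TopologicalSpace X] : PartialOrder (NonemptyOpens X) where
  le U V := V.1 ⊆ U.1
  le_refl U := subset_rfl
  le_trans a b c h₁ h₂ := Set.Subset.trans h₂ h₁
  le_antisymm a b h₁ h₂ := Subtype.ext (Set.Subset.antisymm h₂ h₁)

/-- A space is σ-centered if its poset of nonempty open sets under reverse inclusion
is upwards-σ-centered. -/
def SigmaCenteredSpace (X : Type) [TopologicalSpace X] : Prop :=
  UpSigmaCentered (NonemptyOpens X)

/-- `x` is way below `y` if for every directed set `D`, `y ≤ sSup D` implies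
`x ≤ d` for some `d ∈ D`. -/
def WayBelow {L : Type} [CompleteLattice L] (x y : L) : Prop :=
  ∀ D : Set L, D.Nonempty → DirectedOn (· ≤ ·) D → y ≤ sSup D → ∃ d ∈ D, x ≤ d

/-- A complete lattice is upwards-continuous if for every `y` the set of elements
way below `y` is directed with supremum `y`. -/
def UpContinuousLat (L : Type) [CompleteLattice L] : Prop :=
  ∀ y : L, DirectedOn (· ≤ ·) {x : L | WayBelow x y} ∧ sSup {x : L | WayBelow x y} = y

/-- A lattice is distributive if it satisfies both distributive laws. -/
def DistribLat (L : Type) [CompleteLattice L] : Prop :=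
  ∀ a b c : L, a ⊓ (b ⊔ c) = (a ⊓ b) ⊔ (a ⊓ c) ∧ a ⊔ (b ⊓ c) = (a ⊔ b) ⊓ (a ⊔ c)

/-- A complete lattice is downwards-ccc if any uncountable subset has two distinct
members whose meet is not `⊥`. -/
def DownCCC (L : Type) [CompleteLattice L] : Prop :=
  ∀ S : Set L, ¬ S.Countable → ∃ x ∈ S, ∃ y ∈ S, x ≠ y ∧ x ⊓ y ≠ ⊥

/-- The nonbottom elements of a complete lattice. -/
def NonBot (L : Type) [CompleteLattice L] : Type := {x : L // x ≠ ⊥}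

/-- The nonbottom elements of a complete lattice, with the order reversed. -/
instance {L : Type} [CompleteLattice L] : PartialOrder (NonBot L) where
  le a b := b.1 ≤ a.1
  le_refl a := le_refl _
  le_trans a b c h₁ h₂ := le_trans h₂ h₁
  le_antisymm a b h₁ h₂ := Subtype.ext (le_antisymm h₂ h₁)

/-- A complete lattice is downwards-σ-centered if its set of nonbottom elements,
with the order reversed, is upwards-σ-centered. -/
def DownSigmaCentered (L : Type) [CompleteLattice L] : Prop :=
  UpSigmaCentered (NonBot L)

/-- An element `x` is a non-zero divisor if `x ⊓ y ≠ ⊥` for every `y ≠ ⊥`. -/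
def IsNZDiv {L : Type} [CompleteLattice L] (x : L) : Prop :=
  ∀ y : L, y ≠ ⊥ → x ⊓ y ≠ ⊥

/-- An element `p` is irreducible if `p = a ⊓ b` implies `p = a` or `p = b`. -/
def IrredElem {L : Type} [CompleteLattice L] (p : L) : Prop :=
  ∀ a b : L, p = a ⊓ b → p = a ∨ p = b
/-- The order of Proposition 1's proof: `O₁ ≤ O₂` iff `O₁ = O₂` or `O₂` is compact in `O₁`. -/
def CpOrder {X : Type} [TopologicalSpace X] (O₁ O₂ : NonemptyOpens X) : Prop :=
  O₁ = O₂ ∨ CompactIn O₂.1 O₁.1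

/-! In a locally compact space every point of a nonempty intersection `O₁ ∩ O₂` of open sets
has an open neighbourhood `U` inside a compact `K ⊆ O₁ ∩ O₂`; then `U` is compact in both `O₁`
and `O₂`, so it is a common upper bound. Conversely `CompactIn U O` forces `U ⊆ O` for open `O`,
so a common upper bound lies in the intersection. The ccc and cofinality statements follow, the
latter by applying this to `p` and `p ∩ O*`, which meet because `O*` is dense. -/

section

variable {X : Type} [TopologicalSpace X]

lemma IsCompact.compactIn {K U O : Set X} (hK : IsCompact K) (hUK : U ⊆ K) (hKO : K ⊆ O) :
    CompactIn U O := by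
  intro 𝒞 h𝒞 hcov
  rw [Set.sUnion_eq_biUnion] at hcov
  obtain ⟨𝒻, h𝒻𝒞, h𝒻, hK𝒻⟩ := hK.elim_finite_subcover_image h𝒞 (hKO.trans hcov)
  exact ⟨𝒻, h𝒻𝒞, h𝒻, hUK.trans (by rwa [Set.sUnion_eq_biUnion])⟩

lemma CompactIn.mono_right {U V V' : Set X} (h : CompactIn U V) (hV : V ⊆ V') :
    CompactIn U V' :=
  fun 𝒞 h𝒞 hcov => h 𝒞 h𝒞 (hV.trans hcov)

lemma CompactIn.subset {U V : Set X} (h : CompactIn U V) (hV : IsOpen V) : U ⊆ V := by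
  obtain ⟨𝒻, h𝒻, -, hU𝒻⟩ := h {V} (by simpa using hV) (by simp)
  exact hU𝒻.trans ((Set.sUnion_mono h𝒻).trans (Set.sUnion_singleton V).subset)

lemma CpOrder.subset {O₁ O₂ : NonemptyOpens X} (h : CpOrder O₁ O₂) : O₂.1 ⊆ O₁.1 := by
  rcases h with rfl | h
  · exact subset_rfl
  · exact h.subset O₁.2.1

lemma LocCompactSp.exists_compactIn (hlc : LocCompactSp X) {O : Set X} (hO : IsOpen O)
    (hne : O.Nonempty) : ∃ U : NonemptyOpens X, CompactIn U.1 O := by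
  obtain ⟨x, hx⟩ := hne
  obtain ⟨K, U, hK, hU, hxU, hUK, hKO⟩ := hlc O hO x hx
  exact ⟨⟨U, hU, x, hxU⟩, hK.compactIn hUK hKO⟩

theorem LocCompactSp.exists_cpOrder_upperBound_iff (hlc : LocCompactSp X)
    (O₁ O₂ : NonemptyOpens X) :
    (∃ O₃ : NonemptyOpens X, CpOrder O₁ O₃ ∧ CpOrder O₂ O₃) ↔ (O₁.1 ∩ O₂.1).Nonempty := by
  constructor
  · rintro ⟨O₃, h₁, h₂⟩
    obtain ⟨x, hx⟩ := O₃.2.2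
    exact ⟨x, h₁.subset hx, h₂.subset hx⟩
  · intro hne
    obtain ⟨U, hU⟩ := hlc.exists_compactIn (O₁.2.1.inter O₂.2.1) hne
    exact ⟨U, Or.inr (hU.mono_right Set.inter_subset_left),
      Or.inr (hU.mono_right Set.inter_subset_right)⟩

lemma CCCSpace.exists_ne_inter_nonempty (hccc : CCCSpace X) {S : Set (NonemptyOpens X)}
    (hS : ¬ S.Countable) : ∃ a ∈ S, ∃ b ∈ S, a ≠ b ∧ (a.1 ∩ b.1).Nonempty := by
  have hS' : ¬ (Subtype.val '' S).Countable := fun h =>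
    hS ((Set.mapsTo_image _ S).countable_of_injOn Subtype.val_injective.injOn h)
  obtain ⟨_, ⟨a, ha, rfl⟩, _, ⟨b, hb, rfl⟩, hab, hne⟩ :=
    hccc _ (by rintro _ ⟨a, -, rfl⟩; exact a.2) hS'
  exact ⟨a, ha, b, hb, fun h => hab (congrArg Subtype.val h), hne⟩

end

/-- For a locally compact space X and the poset P of nonempty open sets
ordered by `CpOrder`: two elements have a common upper bound iff they intersect;
hence if X is ccc then P is upwards-ccc; and for every dense open set O* the set
`{O ∈ P : O ⊆ O*}` is cofinal. -/
theorem statement14 (X : Type) [TopologicalSpace X] (hlc : LocCompactSp X) :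
    (∀ O₁ O₂ : NonemptyOpens X,
      (∃ O₃ : NonemptyOpens X, CpOrder O₁ O₃ ∧ CpOrder O₂ O₃) ↔ (O₁.1 ∩ O₂.1).Nonempty) ∧
    (CCCSpace X → ∀ S : Set (NonemptyOpens X), ¬ S.Countable →
      ∃ a ∈ S, ∃ b ∈ S, a ≠ b ∧ ∃ c : NonemptyOpens X, CpOrder a c ∧ CpOrder b c) ∧
    (∀ Ostar : Set X, IsOpen Ostar → Dense Ostar →
      ∀ p : NonemptyOpens X, ∃ q : NonemptyOpens X, q.1 ⊆ Ostar ∧ CpOrder p q) := by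
  have upper := hlc.exists_cpOrder_upperBound_iff
  refine ⟨upper, fun hccc S hS => ?_, fun Ostar hOstar hdense p => ?_⟩
  · obtain ⟨a, ha, b, hb, hab, hne⟩ := hccc.exists_ne_inter_nonempty hS
    exact ⟨a, ha, b, hb, hab, (upper a b).2 hne⟩
  · obtain ⟨x, hx⟩ := hdense.inter_open_nonempty p.1 p.2.1 p.2.2
    obtain ⟨q, hpq, hq⟩ := (upper p ⟨p.1 ∩ Ostar, p.2.1.inter hOstar, x, hx⟩).2 ⟨x, hx.1, hx⟩
    exact ⟨q, hq.subset.trans Set.inter_subset_right, hpq⟩
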